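/- arXiv:1802.09654 — 6 statements merged into one kernel-verified Lean document; each statement's English description precedes it below -/
import Mathlib

section
/- Let G = (V, E) be a finite directed graph, F ∈ ℕ, and L ⊆ V. Suppose G is strongly (2F+1)-robust with respect to L, i.e., every nonempty subset C ⊆ V \ L contains a vertex with at least 2F+1 in-neighbors outside C. Suppose A ⊆ V is an F-local set, i.e., every vertex i ∈ V \ A has at most F in-neighbors in A. Then every nonempty subset C ⊆ V \ (L ∪ A) contains a vertex i with at least F+1 in-neighbors in (V \ C) \ A; in particular, if C = V \ (L ∪ A) is nonempty, some vertex of C has at least F+1 in-neighbors in L. -/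
/-- Strong (2F+1)-robustness w.r.t. L combined with an F-local adversary set A:
every nonempty C ⊆ V \ (L ∪ A) contains a vertex with at least F+1
non-adversarial in-neighbors outside C; in particular, taking C = V \ (L ∪ A),
some vertex of C has at least F+1 in-neighbors in L. -/
theorem strongly_robust_flocal {V : Type*} [Fintype V] [DecidableEq V]
    (inb : V → Finset V) (F : ℕ) (L A : Finset V)
    (hrobust : ∀ C : Finset V, C ⊆ Finset.univ \ L → C.Nonempty →
      ∃ i ∈ C, 2 * F + 1 ≤ ((inb i) \ C).card)
    (hlocal : ∀ i : V, i ∉ A → ((inb i) ∩ A).card ≤ F) :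
    (∀ C : Finset V, C ⊆ Finset.univ \ (L ∪ A) → C.Nonempty →
      ∃ i ∈ C, F + 1 ≤ ((inb i) ∩ ((Finset.univ \ C) \ A)).card) ∧
    ((Finset.univ \ (L ∪ A)).Nonempty →
      ∃ i ∈ Finset.univ \ (L ∪ A), F + 1 ≤ ((inb i) ∩ L).card) := by
  have key : ∀ C : Finset V, C ⊆ Finset.univ \ (L ∪ A) → C.Nonempty →
      ∃ i ∈ C, F + 1 ≤ ((inb i) ∩ ((Finset.univ \ C) \ A)).card := by
    intro C hC hne
    obtain ⟨i, hiC, hcard⟩ := hrobust C (fun x hx => by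
      have := hC hx; simp at this ⊢; exact this.1) hne
    have hiA : i ∉ A := by have := hC hiC; simp at this; exact this.2
    have hA := hlocal i hiA
    have hsplit : (inb i \ C) ⊆ (inb i ∩ ((Finset.univ \ C) \ A)) ∪ (inb i ∩ A) := by
      intro x hx; simp at hx ⊢; tauto
    have h2 : 2 * F + 1 ≤ ((inb i) ∩ ((Finset.univ \ C) \ A)).card + ((inb i) ∩ A).card :=
      le_trans hcard (le_trans (Finset.card_le_card hsplit) (Finset.card_union_le _ _))
    exact ⟨i, hiC, by omega⟩
  refine ⟨key, fun hne => ?_⟩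
  obtain ⟨i, hi, hc⟩ := key _ (subset_refl _) hne
  refine ⟨i, hi, le_trans hc (Finset.card_le_card ?_)⟩
  intro x hx
  simp at hx ⊢
  tauto
end

section
/- Let n ≥ 2 and 1 ≤ k ≤ n−1, and let D = C_n(1,2,…,k) be the k-circulant digraph on vertices ℤ/nℤ with edges (i, i+a mod n) for a = 1,…,k. Let F ∈ ℕ and let L ⊆ V be a set of leaders. If there exists a set P_L of consecutive vertices (modulo n) with |P_L| ≤ k and |P_L ∩ L| ≥ 2F+1, then D is strongly (2F+1)-robust with respect to L: every nonempty subset C ⊆ V \ L contains a vertex with at least 2F+1 in-neighbors outside C. -/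
/-!
Let `P_L = {m, …, m + ℓ - 1}` and walk forward from `m + ℓ` until the first vertex `i` of `C`,
after `s` steps. The `s` vertices just before `i` lie outside `C`, and so do the leaders of
`P_L`, which sit at distances `s + 1, …, s + ℓ` behind `i`. Of these distances at most
`s + ℓ - max s k ≤ min s k` exceed `k` (as `ℓ ≤ k`), and each of them is compensated by one of
the first `min s k` in-neighbors of `i`; hence `i` has at least `|P_L ∩ L|` in-neighbors outside `C`.
-/

open Finset

theorem card_filter_Icc_le {p q : ℕ → Prop} [DecidablePred p] [DecidablePred q] {s ℓ k : ℕ}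
    (hgap : ∀ a ∈ Icc 1 s, p a) (hqp : ∀ a, q a → p a) (hℓk : ℓ ≤ k) :
    #{a ∈ Icc (s + 1) (s + ℓ) | q a} ≤ #{a ∈ Icc 1 k | p a} := by
  set T := {a ∈ Icc (s + 1) (s + ℓ) | q a}
  have hT : ∀ a ∈ T, s + 1 ≤ a ∧ a ≤ s + ℓ ∧ q a := by
    intro a ha
    simp only [T, mem_filter, mem_Icc] at ha
    exact ⟨ha.1.1, ha.1.2, ha.2⟩
  calc #T = #(T ∩ Icc 1 k) + #(T \ Icc 1 k) := (card_inter_add_card_sdiff T _).symm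
    _ ≤ #(T ∩ Icc 1 k) + #(Icc (max s k + 1) (s + ℓ)) := by
      gcongr
      intro a ha
      simp only [mem_sdiff, mem_Icc] at ha ⊢
      have := hT a ha.1
      omega
    _ ≤ #(T ∩ Icc 1 k) + #(Icc 1 (min s k)) := by
      simp only [Nat.card_Icc]
      omega
    _ = #(T ∩ Icc 1 k ∪ Icc 1 (min s k)) := by
      refine (card_union_of_disjoint (disjoint_left.2 fun a ha ha' => ?_)).symm
      have := hT a (mem_inter.1 ha).1
      simp only [mem_Icc] at ha'
      omega
    _ ≤ #{a ∈ Icc 1 k | p a} := by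
      refine card_le_card fun a ha => ?_
      rcases mem_union.1 ha with ha | ha
      · exact mem_filter.2 ⟨(mem_inter.1 ha).2, hqp a (hT a (mem_inter.1 ha).1).2.2⟩
      · simp only [mem_Icc] at ha
        exact mem_filter.2 ⟨mem_Icc.2 (by omega), hgap a (mem_Icc.2 (by omega))⟩

namespace ZMod

variable {n : ℕ}

/-- Wraps around: this is all of `ZMod n` once `n ≤ ℓ`. -/
def arc (m : ZMod n) (ℓ : ℕ) : Finset (ZMod n) :=
  (range ℓ).image fun t : ℕ => m + (t : ZMod n)

theorem card_arc_of_le {ℓ : ℕ} (m : ZMod n) (h : ℓ ≤ n) : #(arc m ℓ) = ℓ := by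
  rw [arc, card_image_of_injOn, card_range]
  intro a ha b hb hab
  refine CharP.natCast_injOn_Iio (ZMod n) n ?_ ?_ (add_left_cancel hab)
  · exact lt_of_lt_of_le (mem_range.1 ha) h
  · exact lt_of_lt_of_le (mem_range.1 hb) h

theorem le_of_card_arc_le {ℓ k : ℕ} (m : ZMod n) (hk : k < n) (h : #(arc m ℓ) ≤ k) : ℓ ≤ k := by
  by_contra! hℓ
  have hsub : arc m (k + 1) ⊆ arc m ℓ := image_subset_image (range_subset_range.2 hℓ)
  have := card_le_card hsub
  rw [card_arc_of_le m hk] at this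
  omega

theorem card_arc_inter_le (m : ZMod n) (ℓ s : ℕ) (L : Finset (ZMod n)) :
    #(arc m ℓ ∩ L) ≤ #{a ∈ Icc (s + 1) (s + ℓ) | m + ℓ + s - ((a : ℕ) : ZMod n) ∈ L} := by
  refine le_trans (card_le_card fun x hx => ?_)
    (card_image_le (f := fun a : ℕ => m + ℓ + s - (a : ZMod n)))
  obtain ⟨hxarc, hxL⟩ := mem_inter.1 hx
  obtain ⟨t, ht, rfl⟩ := mem_image.1 hxarc
  have ht : t < ℓ := mem_range.1 ht
  have hback : m + ℓ + s - ((ℓ + s - t : ℕ) : ZMod n) = m + t := by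
    rw [Nat.cast_sub (by omega)]
    push_cast
    ring
  refine mem_image.2 ⟨ℓ + s - t, mem_filter.2 ⟨mem_Icc.2 ⟨by omega, by omega⟩, ?_⟩, hback⟩
  rwa [hback]

theorem card_image_sub_sdiff {k : ℕ} (hk : k < n) (i : ZMod n) (C : Finset (ZMod n)) :
    #((Icc 1 k).image (fun a : ℕ => i - (a : ZMod n)) \ C) =
      #{a ∈ Icc 1 k | i - ((a : ℕ) : ZMod n) ∉ C} := by
  rw [sdiff_eq_filter, filter_image, card_image_of_injOn]
  intro a ha b hb hab
  refine CharP.natCast_injOn_Iio (ZMod n) n ?_ ?_ (sub_right_injective hab)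
  · exact lt_of_le_of_lt (mem_Icc.1 (mem_filter.1 ha).1).2 hk
  · exact lt_of_le_of_lt (mem_Icc.1 (mem_filter.1 hb).1).2 hk

theorem exists_first_add_mem [NeZero n] {C : Finset (ZMod n)} (hC : C.Nonempty) (x : ZMod n) :
    ∃ s : ℕ, x + s ∈ C ∧ ∀ t < s, x + t ∉ C := by
  classical
  have h : ∃ s : ℕ, x + s ∈ C := by
    obtain ⟨c, hc⟩ := hC
    exact ⟨(c - x).val, by rwa [natCast_zmod_val, add_sub_cancel]⟩
  exact ⟨Nat.find h, Nat.find_spec h, fun t ht => Nat.find_min h ht⟩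

end ZMod

theorem kcirculant_strongly_robust_general (n k F : ℕ)
    (hkn : k ≤ n - 1)
    (L PL : Finset (ZMod n))
    (hconsec : ∃ (m : ZMod n) (ℓ : ℕ),
      PL = (Finset.range ℓ).image (fun t : ℕ => m + (t : ZMod n)))
    (hPLcard : PL.card ≤ k)
    (hPLL : 2 * F + 1 ≤ (PL ∩ L).card) :
    ∀ C : Finset (ZMod n), (∀ i ∈ C, i ∉ L) → C.Nonempty →
      ∃ i ∈ C, 2 * F + 1 ≤
        (((Finset.Icc 1 k).image (fun a : ℕ => i - (a : ZMod n))) \ C).card := by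
  intro C hCL hC
  have hkpos : 0 < k := by
    have := card_le_card (inter_subset_left : PL ∩ L ⊆ PL)
    omega
  have hk_lt : k < n := by omega
  have : NeZero n := ⟨by omega⟩
  obtain ⟨m, ℓ, rfl⟩ := hconsec
  have hℓk : ℓ ≤ k := ZMod.le_of_card_arc_le m hk_lt hPLcard
  obtain ⟨s, hiC, hfirst⟩ := ZMod.exists_first_add_mem hC (m + ℓ)
  refine ⟨_, hiC, ?_⟩
  have hgap : ∀ a ∈ Icc 1 s, m + ℓ + s - (a : ZMod n) ∉ C := by
    intro a ha
    have ha := mem_Icc.1 ha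
    convert hfirst (s - a) (by omega) using 2
    rw [Nat.cast_sub ha.2]
    ring
  rw [ZMod.card_image_sub_sdiff hk_lt]
  calc 2 * F + 1 ≤ #(ZMod.arc m ℓ ∩ L) := hPLL
    _ ≤ #{a ∈ Icc (s + 1) (s + ℓ) | m + ℓ + s - ((a : ℕ) : ZMod n) ∈ L} :=
      ZMod.card_arc_inter_le m ℓ s L
    _ ≤ #{a ∈ Icc 1 k | m + ℓ + s - ((a : ℕ) : ZMod n) ∉ C} :=
      card_filter_Icc_le hgap (fun a haL haC => hCL _ haC haL) hℓk

/-- Theorem 3 (first part): the k-circulant digraph C_n(1,…,k) on ℤ/nℤ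
(in-neighbors of j are j-1,…,j-k mod n) is strongly (2F+1)-robust w.r.t. the
leader set L whenever it contains a set P_L of consecutive vertices (mod n)
with |P_L| ≤ k and |P_L ∩ L| ≥ 2F+1. -/
theorem kcirculant_strongly_robust (n k F : ℕ)
    (hn : 2 ≤ n) (hk1 : 1 ≤ k) (hkn : k ≤ n - 1)
    (L PL : Finset (ZMod n))
    (hconsec : ∃ (m : ZMod n) (ℓ : ℕ),
      PL = (Finset.range ℓ).image (fun t : ℕ => m + (t : ZMod n)))
    (hPLcard : PL.card ≤ k)
    (hPLL : 2 * F + 1 ≤ (PL ∩ L).card) :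
    ∀ C : Finset (ZMod n), (∀ i ∈ C, i ∉ L) → C.Nonempty →
      ∃ i ∈ C, 2 * F + 1 ≤
        (((Finset.Icc 1 k).image (fun a : ℕ => i - (a : ZMod n))) \ C).card :=
  kcirculant_strongly_robust_general n k F hkn L PL hconsec hPLcard hPLL
end

section
/- Let n ≥ 2 and 1 ≤ k ≤ n−1, and let D = C_n(1,2,…,k) be the k-circulant digraph. Let F ∈ ℕ and L ⊆ V. If there exists a set P_L of consecutive vertices (mod n) with |P_L| ≤ k − F and |P_L ∩ L| ≥ F+1, then D is trusted leader-follower (TLF) robust with parameter F: for every nonempty C ⊆ V \ L, either some vertex i ∈ C has at least F+1 in-neighbors in L, or some vertex i ∈ C has at least 2F+1 in-neighbors outside C. -/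
lemma cast_inj_win {n x y : ℕ} (hxy : x < y + n) (hyx : y < x + n)
    (h : (x : ZMod n) = (y : ZMod n)) : x = y := by
  have h1 : x ≡ y [MOD n] := (ZMod.natCast_eq_natCast_iff x y n).mp h
  have h2 : (n : ℤ) ∣ (y : ℤ) - (x : ℤ) := h1.dvd
  rcases lt_trichotomy x y with hlt | heq | hgt
  · have := Int.le_of_dvd (by omega) h2
    omega
  · exact heq
  · have h3 : (n : ℤ) ∣ (x : ℤ) - (y : ℤ) := by
      have := dvd_neg.mpr h2
      rwa [neg_sub] at this
    have := Int.le_of_dvd (by omega) h3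
    omega

/-- Theorem 3 (second part): the k-circulant digraph C_n(1,…,k) on ℤ/nℤ is
trusted leader-follower (TLF) robust with parameter F w.r.t. L whenever it
contains a set P_L of consecutive vertices (mod n) with |P_L| ≤ k - F and
|P_L ∩ L| ≥ F+1: every nonempty C ⊆ V \ L contains a vertex with at least
F+1 in-neighbors in L, or a vertex with at least 2F+1 in-neighbors outside C. -/
theorem kcirculant_tlf_robust (n k F : ℕ)
    (hn : 2 ≤ n) (hk1 : 1 ≤ k) (hkn : k ≤ n - 1)
    (L PL : Finset (ZMod n))
    (hconsec : ∃ (m : ZMod n) (ℓ : ℕ),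
      PL = (Finset.range ℓ).image (fun t : ℕ => m + (t : ZMod n)))
    (hPLcard : PL.card ≤ k - F)
    (hPLL : F + 1 ≤ (PL ∩ L).card) :
    ∀ C : Finset (ZMod n), (∀ i ∈ C, i ∉ L) → C.Nonempty →
      (∃ i ∈ C, F + 1 ≤
        ((((Finset.Icc 1 k).image (fun a : ℕ => i - (a : ZMod n)))) ∩ L).card) ∨
      (∃ i ∈ C, 2 * F + 1 ≤
        (((Finset.Icc 1 k).image (fun a : ℕ => i - (a : ZMod n))) \ C).card) := by
  intro C hC hCne
  haveI : NeZero n := ⟨by omega⟩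
  obtain ⟨m, ℓ0, hPL0⟩ := hconsec
  set g : ℕ → ZMod n := fun t => m + (t : ZMod n) with hgdef
  set ℓ : ℕ := min ℓ0 n with hldef
  have hℓn : ℓ ≤ n := min_le_right _ _
  have hgper : ∀ t : ℕ, g (t + n) = g t := by
    intro t; simp [hgdef, ZMod.natCast_self]
  have hginj : ∀ x y : ℕ, x < y + n → y < x + n → g x = g y → x = y := by
    intro x y h1 h2 h
    have h' : (x : ZMod n) = (y : ZMod n) := by
      simpa [hgdef, add_right_inj] using h
    exact cast_inj_win h1 h2 h'
  have hPL : PL = (Finset.range ℓ).image g := by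
    rw [hPL0]
    apply Finset.Subset.antisymm
    · intro x hx
      simp only [Finset.mem_image, Finset.mem_range] at hx ⊢
      obtain ⟨t, ht, rfl⟩ := hx
      rcases le_or_gt ℓ0 n with hcas | hcas
      · exact ⟨t, by omega, rfl⟩
      · have hmod : t % n < n := Nat.mod_lt t (by omega)
        refine ⟨t % n, by omega, ?_⟩
        simp [hgdef, ZMod.natCast_mod]
    · refine Finset.image_subset_image ?_
      intro t ht
      simp only [Finset.mem_range] at ht ⊢
      omega
  have hcardPL : PL.card = ℓ := by
    rw [hPL, Finset.card_image_of_injOn, Finset.card_range]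
    intro x hx y hy hxy
    simp only [Finset.coe_range, Set.mem_Iio] at hx hy
    exact hginj x y (by omega) (by omega) hxy
  have hF1 : F + 1 ≤ ℓ := by
    have := Finset.card_le_card (Finset.inter_subset_left (s₁ := PL) (s₂ := L))
    omega
  have hkF : ℓ + F ≤ k := by omega
  -- minimal forward distance from the end of PL to C
  have hP : ∃ e, 1 ≤ e ∧ g (ℓ - 1 + e) ∈ C := by
    obtain ⟨x, hx⟩ := hCne
    have hv : (x - m).val < n := ZMod.val_lt _
    have hxv : g ((x - m).val) = x := by
      simp [hgdef, ZMod.natCast_zmod_val]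
    rcases le_or_gt ℓ ((x - m).val) with hcas | hcas
    · refine ⟨(x - m).val - ℓ + 1, by omega, ?_⟩
      have heq : ℓ - 1 + ((x - m).val - ℓ + 1) = (x - m).val := by omega
      rw [heq, hxv]
      exact hx
    · refine ⟨(x - m).val + n - ℓ + 1, by omega, ?_⟩
      have heq : ℓ - 1 + ((x - m).val + n - ℓ + 1) = (x - m).val + n := by omega
      rw [heq, hgper, hxv]
      exact hx
  have hex : ∃ d, (1 ≤ d ∧ d ≤ n ∧ g (ℓ - 1 + d) ∈ C) ∧
      ∀ e, 1 ≤ e → e < d → g (ℓ - 1 + e) ∉ C := by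
    refine ⟨Nat.find hP, ⟨(Nat.find_spec hP).1, ?_, (Nat.find_spec hP).2⟩, ?_⟩
    · obtain ⟨x, hx⟩ := hCne
      have hv : (x - m).val < n := ZMod.val_lt _
      have hxv : g ((x - m).val) = x := by
        simp [hgdef, ZMod.natCast_zmod_val]
      rcases le_or_gt ℓ ((x - m).val) with hcas | hcas
      · have hfind : Nat.find hP ≤ (x - m).val - ℓ + 1 := by
          apply Nat.find_le
          have heq : ℓ - 1 + ((x - m).val - ℓ + 1) = (x - m).val := by omega
          rw [heq, hxv]
          exact ⟨by omega, hx⟩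
        omega
      · have hfind : Nat.find hP ≤ (x - m).val + n - ℓ + 1 := by
          apply Nat.find_le
          have heq : ℓ - 1 + ((x - m).val + n - ℓ + 1) = (x - m).val + n := by omega
          rw [heq, hgper, hxv]
          exact ⟨by omega, hx⟩
        omega
    · intro e he1 hed heC
      exact Nat.find_min hP hed ⟨he1, heC⟩
  clear_value ℓ
  obtain ⟨d, ⟨hd1, hdn, hdC⟩, hmin⟩ := hex
  set p0 := ℓ - 1 + d with hp0
  set i : ZMod n := g p0 with hi
  have hiC : i ∈ C := hdC
  have hwin : ∀ p : ℕ, p0 + n - k ≤ p → p ≤ p0 + n - 1 →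
      g p ∈ (Finset.Icc 1 k).image (fun a : ℕ => i - (a : ZMod n)) := by
    intro p hp1 hp2
    refine Finset.mem_image.mpr ⟨p0 + n - p, Finset.mem_Icc.mpr ⟨by omega, by omega⟩, ?_⟩
    have hsum : (p0 + n - p) + p = p0 + n := by omega
    have hcast : ((p0 + n - p : ℕ) : ZMod n) + (p : ZMod n) = (p0 : ZMod n) := by
      have h := congrArg (fun t : ℕ => (t : ZMod n)) hsum
      push_cast at h
      rw [ZMod.natCast_self, add_zero] at h
      exact h
    show i - ((p0 + n - p : ℕ) : ZMod n) = g p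
    rw [hi, hgdef]
    simp only []
    rw [← hcast]
    ring
  rcases le_or_gt (d + ℓ) (k + 1) with hcase | hcase
  · -- the whole of PL is in the in-neighborhood of i
    left
    refine ⟨i, hiC, ?_⟩
    have hsub : PL ∩ L ⊆ ((Finset.Icc 1 k).image (fun a : ℕ => i - (a : ZMod n))) ∩ L := by
      intro x hx
      rw [Finset.mem_inter] at hx ⊢
      refine ⟨?_, hx.2⟩
      have hx1 := hx.1
      rw [hPL] at hx1
      obtain ⟨t, ht, rfl⟩ := Finset.mem_image.mp hx1
      rw [Finset.mem_range] at ht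
      rw [← hgper t]
      exact hwin (t + n) (by omega) (by omega)
    exact le_trans hPLL (Finset.card_le_card hsub)
  · -- count in-neighbors of i outside C
    right
    refine ⟨i, hiC, ?_⟩
    set c := ℓ - 1 + d - k with hcdef
    set S0 := (Finset.range ℓ).filter (fun t => g t ∈ L) with hS0
    have hS0card : F + 1 ≤ S0.card := by
      have himg : S0.image g = PL ∩ L := by
        apply Finset.Subset.antisymm
        · intro x hx
          obtain ⟨t, ht, rfl⟩ := Finset.mem_image.mp hx
          simp only [hS0, Finset.mem_filter, Finset.mem_range] at ht
          rw [Finset.mem_inter, hPL]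
          exact ⟨Finset.mem_image.mpr ⟨t, Finset.mem_range.mpr ht.1, rfl⟩, ht.2⟩
        · intro x hx
          rw [Finset.mem_inter, hPL] at hx
          obtain ⟨t, ht, rfl⟩ := Finset.mem_image.mp hx.1
          rw [Finset.mem_range] at ht
          refine Finset.mem_image.mpr ⟨t, ?_, rfl⟩
          simp only [hS0, Finset.mem_filter, Finset.mem_range]
          exact ⟨ht, hx.2⟩
      have hinj0 : Set.InjOn g ↑S0 := by
        intro x hx y hy hxy
        simp only [hS0, Finset.coe_filter, Set.mem_setOf_eq, Finset.mem_range] at hx hy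
        exact hginj x y (by omega) (by omega) hxy
      have hcards : S0.card = (PL ∩ L).card := by
        rw [← himg, Finset.card_image_of_injOn hinj0]
      omega
    set S1 := S0.filter (fun t => c ≤ t) with hS1
    have hS1card : S0.card ≤ S1.card + c := by
      have hsub01 : S0 ⊆ S1 ∪ Finset.range c := by
        intro t ht
        rw [Finset.mem_union]
        rcases le_or_gt c t with hct | hct
        · exact Or.inl (Finset.mem_filter.mpr ⟨ht, hct⟩)
        · exact Or.inr (Finset.mem_range.mpr hct)
      calc S0.card ≤ (S1 ∪ Finset.range c).card := Finset.card_le_card hsub01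
        _ ≤ S1.card + (Finset.range c).card := Finset.card_union_le _ _
        _ = S1.card + c := by rw [Finset.card_range]
    have hS1range : ∀ t ∈ S1, c ≤ t ∧ t < ℓ := by
      intro t ht
      simp only [hS1, hS0, Finset.mem_filter, Finset.mem_range] at ht
      exact ⟨ht.2, ht.1.1⟩
    set T1 := Finset.Icc (max (p0 + n - k) (ℓ + n)) (p0 + n - 1) with hT1
    have hT1card : T1.card = min k (d - 1) := by
      rw [hT1, Nat.card_Icc]
      omega
    set A := S1.image (· + n) ∪ T1 with hA
    have hAwin : ∀ p ∈ A, p0 + n - k ≤ p ∧ p ≤ p0 + n - 1 := by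
      intro p hp
      rw [hA, Finset.mem_union] at hp
      rcases hp with hp | hp
      · obtain ⟨t, ht, rfl⟩ := Finset.mem_image.mp hp
        have := hS1range t ht
        omega
      · rw [hT1, Finset.mem_Icc] at hp
        omega
    have hAcard : S1.card + min k (d - 1) ≤ A.card := by
      have hdisj : Disjoint (S1.image (· + n)) T1 := by
        rw [Finset.disjoint_left]
        intro p hp hp2
        obtain ⟨t, ht, rfl⟩ := Finset.mem_image.mp hp
        have h1 := hS1range t ht
        rw [hT1, Finset.mem_Icc] at hp2
        omega
      rw [hA, Finset.card_union_of_disjoint hdisj,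
        Finset.card_image_of_injective _ (add_left_injective n), hT1card]
    have hgA : A.image g ⊆ ((Finset.Icc 1 k).image (fun a : ℕ => i - (a : ZMod n))) \ C := by
      intro x hx
      obtain ⟨p, hp, rfl⟩ := Finset.mem_image.mp hx
      have hw := hAwin p hp
      rw [Finset.mem_sdiff]
      refine ⟨hwin p hw.1 hw.2, ?_⟩
      rw [hA, Finset.mem_union] at hp
      rcases hp with hp | hp
      · obtain ⟨t, ht, rfl⟩ := Finset.mem_image.mp hp
        have htL : g t ∈ L := by
          simp only [hS1, hS0, Finset.mem_filter, Finset.mem_range] at ht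
          exact ht.1.2
        rw [hgper]
        exact fun hmem => hC _ hmem htL
      · rw [hT1, Finset.mem_Icc] at hp
        have he := hmin (p - (ℓ - 1 + n)) (by omega) (by omega)
        intro hmem
        apply he
        have heq : (ℓ - 1 + (p - (ℓ - 1 + n))) + n = p := by omega
        rw [← heq, hgper] at hmem
        exact hmem
    have hinjA : Set.InjOn g ↑A := by
      intro x hx y hy hxy
      rw [Finset.mem_coe] at hx hy
      have h1 := hAwin x hx
      have h2 := hAwin y hy
      exact hginj x y (by omega) (by omega) hxy
    have hfin : A.card ≤ ((((Finset.Icc 1 k).image (fun a : ℕ => i - (a : ZMod n))) \ C)).card := by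
      rw [← Finset.card_image_of_injOn hinjA]
      exact Finset.card_le_card hgA
    omega
end

section
/- Consider the W-MSR filtering rule: agent i holds value x_i ∈ ℝ and receives a finite multiset of values from in-neighbors; it removes the F largest values strictly greater than x_i (or all of them if fewer than F exceed x_i), and symmetrically the F smallest values strictly less than x_i. If a multiset S of at least F+1 received values all equal a common constant C_L, then at least one value equal to C_L survives the filtering (i.e., C_L ∈ R_i, the retained set). -/
/-- Lemma 2: under W-MSR filtering with parameter F (remove the up-to-F largest
received values strictly greater than the own state x, and the up-to-F smallest
values strictly less than x), if a sub-multiset T of at least F+1 received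
values all equal a common constant C_L, then some value equal to C_L survives
the filtering. -/
theorem wmsr_leader_value_survives (F : ℕ) (x CL : ℝ)
    (S T Dhi Dlo : Multiset ℝ)
    (hT : T ≤ S) (hTcard : F + 1 ≤ Multiset.card T)
    (hTval : ∀ v ∈ T, v = CL)
    (hDhi : Dhi ≤ S.filter (fun v => x < v))
    (hDhicard : Multiset.card Dhi = min F (Multiset.card (S.filter (fun v => x < v))))
    (hDhimax : ∀ a ∈ S.filter (fun v => x < v) - Dhi, ∀ b ∈ Dhi, a ≤ b)
    (hDlo : Dlo ≤ S.filter (fun v => v < x))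
    (hDlocard : Multiset.card Dlo = min F (Multiset.card (S.filter (fun v => v < x))))
    (hDlomin : ∀ a ∈ S.filter (fun v => v < x) - Dlo, ∀ b ∈ Dlo, b ≤ a) :
    CL ∈ S - (Dhi + Dlo) := by
  rw [← Multiset.count_pos, Multiset.count_sub, Multiset.count_add]
  have hTS : (F + 1 : ℕ) ≤ Multiset.count CL S := by
    calc F + 1 ≤ Multiset.card T := hTcard
      _ = Multiset.count CL T :=
        (Multiset.count_eq_card.mpr (fun v hv => (hTval v hv).symm)).symm
      _ ≤ Multiset.count CL S := Multiset.count_le_of_le CL hT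
  have hhiF : Multiset.count CL Dhi ≤ F :=
    le_trans (Multiset.count_le_card CL Dhi) (by rw [hDhicard]; exact min_le_left _ _)
  have hloF : Multiset.count CL Dlo ≤ F :=
    le_trans (Multiset.count_le_card CL Dlo) (by rw [hDlocard]; exact min_le_left _ _)
  have hhi0 : ¬ x < CL → Multiset.count CL Dhi = 0 := by
    intro h
    rw [Multiset.count_eq_zero]
    intro hmem
    have := (Multiset.mem_filter.mp (Multiset.mem_of_le hDhi hmem)).2
    exact h this
  have hlo0 : ¬ CL < x → Multiset.count CL Dlo = 0 := by
    intro h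
    rw [Multiset.count_eq_zero]
    intro hmem
    have := (Multiset.mem_filter.mp (Multiset.mem_of_le hDlo hmem)).2
    exact h this
  rcases lt_trichotomy CL x with h | h | h
  · have := hhi0 (by linarith)
    omega
  · have h1 := hhi0 (by linarith)
    have h2 := hlo0 (by linarith)
    omega
  · have := hlo0 (by linarith)
    omega
end

section
/- Let G be a digraph with an F-local adversary set A and normal agents N running W-MSR with parameter F. Fix a time t, and let M̄ = max over j ∈ V \ A of x_j(t) (the max over non-adversarial values and the reference). Then for any normal agent i, every adversarial value x_a(t) > M̄ received by i is removed by i's W-MSR filter: since x_a(t) exceeds every non-adversarial in-neighbor value and i receives at most F adversarial values, x_a(t) is among the F largest values strictly greater than x_i(t) and hence is filtered out. Symmetrically, adversarial values below m̄ = min over V \ A are filtered out. -/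
/-- Core filtering argument of Lemma 3: for a normal agent i with at most F
adversarial in-neighbors, every adversarial value above M̄ (the max over
non-adversarial values) is removed by the W-MSR filter, symmetrically for
values below m̄, and hence every retained value lies in [m̄, M̄]. -/
theorem wmsr_filters_adversarial_outliers {V : Type*} [Fintype V] [DecidableEq V]
    (F : ℕ) (A : Finset V) (inb : V → Finset V)
    (i : V) (hi : i ∉ A) (hlocal : ((inb i) ∩ A).card ≤ F)
    (y : V → ℝ) (xi mbar Mbar : ℝ)
    (hub : ∀ j : V, j ∉ A → y j ≤ Mbar) (hlb : ∀ j : V, j ∉ A → mbar ≤ y j)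
    (hxiub : xi ≤ Mbar) (hxilb : mbar ≤ xi)
    (Dhi Dlo : Finset V)
    (hDhi : Dhi ⊆ (inb i).filter (fun j => xi < y j))
    (hDhicard : Dhi.card = min F (((inb i).filter (fun j => xi < y j)).card))
    (hDhimax : ∀ j ∈ (inb i).filter (fun j => xi < y j) \ Dhi, ∀ b ∈ Dhi, y j ≤ y b)
    (hDlo : Dlo ⊆ (inb i).filter (fun j => y j < xi))
    (hDlocard : Dlo.card = min F (((inb i).filter (fun j => y j < xi)).card))
    (hDlomin : ∀ j ∈ (inb i).filter (fun j => y j < xi) \ Dlo, ∀ b ∈ Dlo, y b ≤ y j) :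
    (∀ a ∈ inb i, a ∈ A → Mbar < y a → a ∈ Dhi) ∧
    (∀ a ∈ inb i, a ∈ A → y a < mbar → a ∈ Dlo) ∧
    (∀ j ∈ (inb i) \ (Dhi ∪ Dlo), mbar ≤ y j ∧ y j ≤ Mbar) := by
  have hpart1 : ∀ a ∈ inb i, a ∈ A → Mbar < y a → a ∈ Dhi := by
    intro a ha haA hMa
    by_contra haD
    have hafil : a ∈ (inb i).filter (fun j => xi < y j) := by
      simp only [Finset.mem_filter]
      exact ⟨ha, lt_of_le_of_lt hxiub hMa⟩
    -- Dhi is strictly smaller than filter, so Dhi.card = F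
    have hssub : Dhi ⊂ (inb i).filter (fun j => xi < y j) :=
      ⟨hDhi, fun h => haD (h hafil)⟩
    have hcardlt : Dhi.card < ((inb i).filter (fun j => xi < y j)).card :=
      Finset.card_lt_card hssub
    have hDF : Dhi.card = F := by
      rcases min_cases F (((inb i).filter (fun j => xi < y j)).card) with ⟨h1, _⟩ | ⟨h1, _⟩
      · omega
      · omega
    -- all of Dhi is adversarial
    have hDsub : insert a Dhi ⊆ (inb i) ∩ A := by
      intro b hb
      rcases Finset.mem_insert.mp hb with rfl | hb
      · exact Finset.mem_inter.mpr ⟨ha, haA⟩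
      · have hbfil := hDhi hb
        have hbin := (Finset.mem_filter.mp hbfil).1
        have : Mbar < y b := lt_of_lt_of_le hMa
          (hDhimax a (Finset.mem_sdiff.mpr ⟨hafil, haD⟩) b hb)
        by_contra hbA
        have hbA' : b ∉ A := fun h => hbA (Finset.mem_inter.mpr ⟨hbin, h⟩)
        exact absurd (hub b hbA') (not_le.mpr this)
    have : F + 1 ≤ ((inb i) ∩ A).card := by
      have := Finset.card_le_card hDsub
      rwa [Finset.card_insert_of_notMem haD, hDF] at this
    omega
  have hpart2 : ∀ a ∈ inb i, a ∈ A → y a < mbar → a ∈ Dlo := by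
    intro a ha haA hma
    by_contra haD
    have hafil : a ∈ (inb i).filter (fun j => y j < xi) := by
      simp only [Finset.mem_filter]
      exact ⟨ha, lt_of_lt_of_le hma hxilb⟩
    have hssub : Dlo ⊂ (inb i).filter (fun j => y j < xi) :=
      ⟨hDlo, fun h => haD (h hafil)⟩
    have hcardlt : Dlo.card < ((inb i).filter (fun j => y j < xi)).card :=
      Finset.card_lt_card hssub
    have hDF : Dlo.card = F := by
      rcases min_cases F (((inb i).filter (fun j => y j < xi)).card) with ⟨h1, _⟩ | ⟨h1, _⟩
      · omega
      · omega
    have hDsub : insert a Dlo ⊆ (inb i) ∩ A := by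
      intro b hb
      rcases Finset.mem_insert.mp hb with rfl | hb
      · exact Finset.mem_inter.mpr ⟨ha, haA⟩
      · have hbfil := hDlo hb
        have hbin := (Finset.mem_filter.mp hbfil).1
        have : y b < mbar := lt_of_le_of_lt
          (hDlomin a (Finset.mem_sdiff.mpr ⟨hafil, haD⟩) b hb) hma
        by_contra hbA
        have hbA' : b ∉ A := fun h => hbA (Finset.mem_inter.mpr ⟨hbin, h⟩)
        exact absurd (hlb b hbA') (not_le.mpr this)
    have : F + 1 ≤ ((inb i) ∩ A).card := by
      have := Finset.card_le_card hDsub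
      rwa [Finset.card_insert_of_notMem haD, hDF] at this
    omega
  refine ⟨hpart1, hpart2, ?_⟩
  intro j hj
  obtain ⟨hjin, hjD⟩ := Finset.mem_sdiff.mp hj
  have hjD' := Finset.notMem_union.mp hjD
  by_cases hjA : j ∈ A
  · constructor
    · by_contra h
      exact hjD'.2 (hpart2 j hjin hjA (not_le.mp h))
    · by_contra h
      exact hjD'.1 (hpart1 j hjin hjA (not_le.mp h))
  · exact ⟨hlb j hjA, hub j hjA⟩
end

section
/- Suppose a network of agents runs W-MSR with parameter F and the set of agents behaving as leaders satisfies |L| ≤ F. Then consensus tracking to an arbitrary reference can fail: concretely, if at time t₁ all normal agents and all adversarial agents have the common state a, the reference value is a₁ ≠ a, leaders hold value a₁, and each normal agent has at most F in-neighbors with value ≠ a (namely only leaders), then every normal agent filters out all leader values and x_i(t) = a for all normal i and all t ≥ t₁. -/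
/-!
An agent whose in-neighbours disagree with it in at most `F` places sees at most `F` strictly
larger and at most `F` strictly smaller values, so W-MSR discards all of them; its update is then
a convex combination of copies of its own state. With all non-leaders at `a` and at most `F`
leaders around each normal agent, this keeps every normal agent at `a` forever, by induction
on time.
-/

open Finset

theorem sum_mul_eq_of_sum_eq_one {V : Type*} {R : Finset V} {w f : V → ℝ} {c : ℝ}
    (hw : ∑ j ∈ R, w j = 1) (hf : ∀ j ∈ R, f j = c) : ∑ j ∈ R, w j * f j = c := by
  rw [sum_congr rfl fun j hj => by rw [hf j hj], ← sum_mul, hw, one_mul]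

section

variable {V : Type*} [DecidableEq V]

/-- One W-MSR update of agent `i` with in-neighbours `N`, from the states `y` to the new state
`y'`; `R` is the set of agents retained after trimming. -/
def IsWMSRStep (F : ℕ) (N : Finset V) (y : V → ℝ) (i : V) (y' : ℝ) : Prop :=
  ∃ (R : Finset V) (w : V → ℝ),
    R ⊆ insert i N ∧ i ∈ R ∧
    ((N.filter (fun j => y i < y j)).card ≤ F → ∀ j ∈ R, ¬ (y i < y j)) ∧
    ((N.filter (fun j => y j < y i)).card ≤ F → ∀ j ∈ R, ¬ (y j < y i)) ∧
    (∀ j ∈ R, 0 ≤ w j) ∧ (∑ j ∈ R, w j = 1) ∧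
    y' = ∑ j ∈ R, w j * y j

theorem IsWMSRStep.eq_of_card_filter_ne_le {F : ℕ} {N : Finset V} {y : V → ℝ} {i : V}
    {y' : ℝ} (h : IsWMSRStep F N y i y')
    (hcard : (N.filter (fun j => y j ≠ y i)).card ≤ F) : y' = y i := by
  obtain ⟨R, w, -, -, hupper, hlower, -, hw, rfl⟩ := h
  have hno_larger := hupper <|
    (card_le_card <| monotone_filter_right N fun _ _ h => h.ne').trans hcard
  have hno_smaller := hlower <|
    (card_le_card <| monotone_filter_right N fun _ _ h => h.ne).trans hcard
  exact sum_mul_eq_of_sum_eq_one hw fun j hj =>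
    le_antisymm (not_lt.mp (hno_larger j hj)) (not_lt.mp (hno_smaller j hj))

end

theorem wmsr_few_leaders_no_tracking_general {V : Type*} [DecidableEq V]
    (F : ℕ) (Nrm Ldr Adv : Finset V) (inb : V → Finset V)
    (x : ℕ → V → ℝ) (a : ℝ) (t₁ : ℕ)
    (hpart : ∀ i : V, i ∈ Nrm ∨ i ∈ Ldr ∨ i ∈ Adv)
    (hLnbr : ∀ i ∈ Nrm, ((inb i) ∩ Ldr).card ≤ F)
    (hinit : ∀ i ∈ Nrm, x t₁ i = a)
    (hadv : ∀ i ∈ Adv, ∀ t, t₁ ≤ t → x t i = a)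
    (hupdate : ∀ i ∈ Nrm, ∀ t, t₁ ≤ t →
      ∃ (R : Finset V) (w : V → ℝ),
        R ⊆ insert i (inb i) ∧ i ∈ R ∧
        (((inb i).filter (fun j => x t i < x t j)).card ≤ F →
          ∀ j ∈ R, ¬ (x t i < x t j)) ∧
        (((inb i).filter (fun j => x t j < x t i)).card ≤ F →
          ∀ j ∈ R, ¬ (x t j < x t i)) ∧
        (∀ j ∈ R, 0 ≤ w j) ∧ (∑ j ∈ R, w j = 1) ∧
        x (t + 1) i = ∑ j ∈ R, w j * x t j) :
    ∀ i ∈ Nrm, ∀ t, t₁ ≤ t → x t i = a := by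
  suffices h : ∀ t, t₁ ≤ t → ∀ i ∈ Nrm, x t i = a from fun i hi t ht => h t ht i hi
  intro t ht
  induction t, ht using Nat.le_induction with
  | base => exact hinit
  | succ t ht ih =>
    intro i hi
    have hdisagree_ldr : ∀ j, x t j ≠ a → j ∈ Ldr := fun j hj =>
      (hpart j).elim (fun hN => absurd (ih j hN) hj)
        (Or.resolve_right · fun hA => hj (hadv j hA t ht))
    have hcard : ((inb i).filter (fun j => x t j ≠ x t i)).card ≤ F := by
      refine (card_le_card fun j hj => ?_).trans (hLnbr i hi)
      rw [mem_filter, ih i hi] at hj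
      exact mem_inter.mpr ⟨hj.1, hdisagree_ldr j hj.2⟩
    rw [IsWMSRStep.eq_of_card_filter_ne_le (hupdate i hi t ht) hcard, ih i hi]

/-- Lemma 1 (necessity of F+1 leaders): with at most F leaders, if at time t₁
all normal and adversarial agents hold a common value a, adversaries keep
value a, leaders hold a₁ ≠ a, and each normal agent has at most F in-neighbors
that are leaders (its only in-neighbors with value ≠ a), then under W-MSR every
normal agent filters out all leader values and stays at a forever. -/
theorem wmsr_few_leaders_no_tracking {V : Type*} [Fintype V] [DecidableEq V]
    (F : ℕ) (Nrm Ldr Adv : Finset V) (inb : V → Finset V)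
    (x : ℕ → V → ℝ) (a a₁ : ℝ) (t₁ : ℕ)
    (hne : a₁ ≠ a)
    (hLcard : Ldr.card ≤ F)
    (hpart : ∀ i : V, i ∈ Nrm ∨ i ∈ Ldr ∨ i ∈ Adv)
    (hLnbr : ∀ i ∈ Nrm, ((inb i) ∩ Ldr).card ≤ F)
    (hinit : ∀ i ∈ Nrm, x t₁ i = a)
    (hadv : ∀ i ∈ Adv, ∀ t, t₁ ≤ t → x t i = a)
    (hldr : ∀ i ∈ Ldr, ∀ t, t₁ ≤ t → x t i = a₁)
    (hupdate : ∀ i ∈ Nrm, ∀ t, t₁ ≤ t →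
      ∃ (R : Finset V) (w : V → ℝ),
        R ⊆ insert i (inb i) ∧ i ∈ R ∧
        (((inb i).filter (fun j => x t i < x t j)).card ≤ F →
          ∀ j ∈ R, ¬ (x t i < x t j)) ∧
        (((inb i).filter (fun j => x t j < x t i)).card ≤ F →
          ∀ j ∈ R, ¬ (x t j < x t i)) ∧
        (∀ j ∈ R, 0 ≤ w j) ∧ (∑ j ∈ R, w j = 1) ∧
        x (t + 1) i = ∑ j ∈ R, w j * x t j) :
    ∀ i ∈ Nrm, ∀ t, t₁ ≤ t → x t i = a :=
  wmsr_few_leaders_no_tracking_general F Nrm Ldr Adv inb x a t₁ hpart hLnbr hinit hadv hupdate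
end
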